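/- arXiv:1804.10081 — 2 statements merged into one kernel-verified Lean document; each statement's English description precedes it below -/
import Mathlib

section
/- For N ≥ k ≥ 0, lim_{λ→0} λ^{N-k} S_{2,1/λ}(N,k) = S_1(N,k), the signed Stirling number of the first kind. -/
/-- The generalized falling factorial `(x)_{n,μ} = x(x-μ)⋯(x-(n-1)μ)`. -/
noncomputable def genFall (x : ℝ) (n : ℕ) (mu : ℝ) : ℝ :=
  ∏ j ∈ Finset.range n, (x - j * mu)

/-- The degenerate Stirling numbers of the second kind. -/
noncomputable def degStirling2 (mu : ℝ) (n k : ℕ) : ℝ :=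
  ((-1 : ℝ) ^ k / k.factorial) *
    ∑ l ∈ Finset.range (k + 1), (-1 : ℝ) ^ l * (k.choose l) * genFall l n mu

/-- The signed Stirling numbers of the first kind, defined by
`(x)_N = Σ_k S_1(N,k) x^k`. -/
noncomputable def stirling1 (N k : ℕ) : ℝ :=
  (descPochhammer ℝ N).coeff k

open Polynomial Finset fwdDiff

lemma descPoch_eval_prod (N : ℕ) (x : ℝ) :
    (descPochhammer ℝ N).eval x = ∏ j ∈ Finset.range N, (x - j) := by
  induction N with
  | zero => simp
  | succ n ih => rw [descPochhammer_succ_eval, ih, Finset.prod_range_succ]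

lemma coeff_delta (p : ℝ[X]) (k i : ℕ) (hp : p.natDegree ≤ k + 1) (hi : k ≤ i) :
    (p.comp (X + C 1) - p).coeff i = (i + 1 : ℝ) * p.coeff (i + 1) := by
  have h1 : p.comp (X + C 1) = Polynomial.taylor 1 p := (Polynomial.taylor_apply 1 p).symm
  rw [Polynomial.coeff_sub, h1, Polynomial.taylor_coeff]
  have hd : (Polynomial.hasseDeriv i p).natDegree < 2 := by
    have := Polynomial.natDegree_hasseDeriv_le p i
    omega
  rw [Polynomial.eval_eq_sum_range' hd]
  simp [Polynomial.hasseDeriv_coeff, Finset.sum_range_succ]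
  rw [add_comm 1 i, Nat.choose_succ_self_right]
  push_cast; ring

lemma fwdDiff_eval (p : ℝ[X]) :
    Δ_[(1:ℝ)] (fun x => p.eval x) = fun x => (p.comp (X + C 1) - p).eval x := by
  funext x
  simp [fwdDiff, Polynomial.eval_comp]

lemma iter_fwdDiff_eval : ∀ (k : ℕ) (p : ℝ[X]), p.natDegree ≤ k → ∀ y : ℝ,
    (Δ_[(1:ℝ)])^[k] (fun x => p.eval x) y = k.factorial * p.coeff k := by
  intro k
  induction k with
  | zero =>
    intro p hp y
    obtain ⟨c, rfl⟩ := Polynomial.natDegree_eq_zero.mp (Nat.le_zero.mp hp)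
    simp
  | succ k ih =>
    intro p hp y
    rw [Function.iterate_succ_apply, fwdDiff_eval,
      ih _ (by
        rw [Polynomial.natDegree_le_iff_coeff_eq_zero]
        intro m hm
        rw [coeff_delta p k m hp (by omega)]
        have : p.coeff (m+1) = 0 := Polynomial.coeff_eq_zero_of_natDegree_lt (by omega)
        simp [this]),
      coeff_delta p k k hp le_rfl, Nat.factorial_succ]
    push_cast; ring

lemma altsum (k : ℕ) (p : ℝ[X]) (hp : p.natDegree ≤ k) :
    ∑ l ∈ Finset.range (k+1), (-1:ℝ)^l * (k.choose l) * p.eval (l : ℝ)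
      = (-1:ℝ)^k * k.factorial * p.coeff k := by
  have h := fwdDiff_iter_eq_sum_shift (1:ℝ) (fun x => p.eval x) k 0
  rw [iter_fwdDiff_eval k p hp 0] at h
  calc ∑ l ∈ Finset.range (k+1), (-1:ℝ)^l * (k.choose l) * p.eval (l : ℝ)
      = (-1:ℝ)^k * ∑ l ∈ Finset.range (k+1),
          (((-1:ℤ)^(k-l) * (k.choose l)) • (fun x : ℝ => p.eval x) ((0:ℝ) + l • (1:ℝ))) := by
        rw [Finset.mul_sum]
        refine Finset.sum_congr rfl fun l hl => ?_
        have hlk : l ≤ k := Nat.lt_succ_iff.mp (Finset.mem_range.mp hl)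
        have e : ((-1:ℝ))^k = (-1)^(k-l) * (-1)^l := by
          rw [← pow_add, Nat.sub_add_cancel hlk]
        have e2 : ((-1:ℝ))^(k-l) * (-1)^(k-l) = 1 := by
          rw [← pow_add, ← two_mul]; exact Even.neg_one_pow ⟨k-l, by ring⟩
        simp only [zsmul_eq_mul, Int.cast_mul, Int.cast_pow, Int.cast_neg, Int.cast_one,
          Int.cast_natCast, nsmul_eq_mul, mul_one, zero_add]
        rw [e]
        calc (-1:ℝ)^l * (k.choose l) * p.eval (l:ℝ)
            = ((-1:ℝ)^(k-l) * (-1)^(k-l)) * ((-1)^l * (k.choose l) * p.eval (l:ℝ)) := by rw [e2]; ring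
          _ = (-1:ℝ)^(k-l) * (-1)^l * ((-1)^(k-l) * (k.choose l) * p.eval (l:ℝ)) := by ring
    _ = (-1:ℝ)^k * (k.factorial * p.coeff k) := by rw [← h]
    _ = _ := by ring

lemma altsum_pow (k m : ℕ) (h : m ≤ k) :
    ∑ l ∈ Finset.range (k+1), (-1:ℝ)^l * (k.choose l) * (l:ℝ)^m
      = if m = k then (-1:ℝ)^k * k.factorial else 0 := by
  have h2 := altsum k ((X:ℝ[X])^m) (by simpa using h)
  simp only [Polynomial.eval_pow, Polynomial.eval_X, Polynomial.coeff_X_pow] at h2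
  rw [h2]
  by_cases hmk : k = m
  · simp [hmk]
  · rw [if_neg (fun h : m = k => hmk h.symm)]; simp [hmk]

/-- For `N ≥ k ≥ 0`, `lim_{λ→0} λ^{N-k} S_{2,1/λ}(N,k) = S_1(N,k)`. -/
theorem stmt13 (N k : ℕ) (hkN : k ≤ N) :
    Filter.Tendsto (fun lam : ℝ => lam ^ (N - k) * degStirling2 (1 / lam) N k)
      (nhdsWithin 0 {0}ᶜ) (nhds (stirling1 N k)) := by
  set c : ℕ → ℝ := fun m => ∑ l ∈ Finset.range (k+1), (-1:ℝ)^l * (k.choose l) * (l:ℝ)^m with hc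
  set F : ℝ → ℝ := fun lam => ((-1:ℝ)^k / k.factorial) *
      ∑ m ∈ Finset.range (N+1), stirling1 N m * c m * lam^(m-k) with hF
  have hck : c k = (-1:ℝ)^k * k.factorial := by rw [hc]; simpa using altsum_pow k k le_rfl
  have hclt : ∀ m, m < k → c m = 0 := by
    intro m hm
    rw [hc]; simpa [Nat.ne_of_lt hm] using altsum_pow k m hm.le
  have hF0 : F 0 = stirling1 N k := by
    rw [hF]; beta_reduce
    rw [Finset.sum_eq_single_of_mem k (Finset.mem_range.mpr (by omega)) ?_]
    · rw [hck, Nat.sub_self, pow_zero, mul_one]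
      have h1 : ((-1:ℝ)^k) * ((-1:ℝ)^k) = 1 := by
        rw [← pow_add, ← two_mul]; exact Even.neg_one_pow ⟨k, by ring⟩
      have h2 : (k.factorial : ℝ) ≠ 0 := by positivity
      field_simp
      linear_combination stirling1 N k * h1
    · intro m _ hmk
      rcases lt_or_gt_of_ne hmk with h | h
      · rw [hclt m h]; ring
      · rw [zero_pow (by omega : m - k ≠ 0)]; ring
  have key : ∀ lam : ℝ, lam ≠ 0 → lam ^ (N-k) * degStirling2 (1/lam) N k = F lam := by
    intro lam hlam
    have hpoch : ∀ l : ℕ, genFall l N (1/lam)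
        = (lam⁻¹)^N * ∑ m ∈ Finset.range (N+1), stirling1 N m * (l:ℝ)^m * lam^m := by
      intro l
      have h1 : genFall (l:ℝ) N (1/lam) = (lam⁻¹)^N * (descPochhammer ℝ N).eval ((l:ℝ)*lam) := by
        have hpc : (lam⁻¹)^N = ∏ _j ∈ Finset.range N, lam⁻¹ := by
          rw [Finset.prod_const, Finset.card_range]
        rw [descPoch_eval_prod, genFall, hpc, ← Finset.prod_mul_distrib]
        refine Finset.prod_congr rfl fun j _ => ?_
        field_simp
      rw [h1]
      congr 1
      have hdeg : (descPochhammer ℝ N).natDegree < N + 1 := by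
        rw [descPochhammer_natDegree]; omega
      rw [Polynomial.eval_eq_sum_range' hdeg]
      refine Finset.sum_congr rfl fun m _ => ?_
      rw [mul_pow, stirling1]
      ring
    have swap : ∑ l ∈ Finset.range (k+1), (-1:ℝ)^l * (k.choose l) * genFall l N (1/lam)
        = (lam⁻¹)^N * ∑ m ∈ Finset.range (N+1), stirling1 N m * c m * lam^m := by
      calc ∑ l ∈ Finset.range (k+1), (-1:ℝ)^l * (k.choose l) * genFall l N (1/lam)
          = ∑ l ∈ Finset.range (k+1), ∑ m ∈ Finset.range (N+1),
              (lam⁻¹)^N * (stirling1 N m * ((-1:ℝ)^l * (k.choose l) * (l:ℝ)^m) * lam^m) := by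
            refine Finset.sum_congr rfl fun l _ => ?_
            rw [hpoch l, Finset.mul_sum, Finset.mul_sum]
            exact Finset.sum_congr rfl fun m _ => by ring
        _ = ∑ m ∈ Finset.range (N+1), ∑ l ∈ Finset.range (k+1),
              (lam⁻¹)^N * (stirling1 N m * ((-1:ℝ)^l * (k.choose l) * (l:ℝ)^m) * lam^m) :=
            Finset.sum_comm
        _ = (lam⁻¹)^N * ∑ m ∈ Finset.range (N+1), stirling1 N m * c m * lam^m := by
            rw [Finset.mul_sum]
            refine Finset.sum_congr rfl fun m _ => ?_
            rw [hc]
            simp only [Finset.mul_sum, Finset.sum_mul]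
    rw [degStirling2, swap, hF]; beta_reduce
    simp only [Finset.mul_sum]
    refine Finset.sum_congr rfl fun m _ => ?_
    rcases lt_or_ge m k with h | h
    · rw [hclt m h]; ring
    · have hpow : lam^(N-k) * ((lam⁻¹)^N * lam^m) = lam^(m-k) := by
        have e : lam ^ (N-k) * lam ^ m = lam ^ N * lam ^ (m-k) := by
          rw [← pow_add, ← pow_add]; congr 1; omega
        field_simp
        linear_combination (lam⁻¹)^N * e + lam^(m-k) * (by rw [← mul_pow, mul_inv_cancel₀ hlam, one_pow] : lam^N * (lam⁻¹)^N = 1)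
      calc lam^(N-k) * (((-1:ℝ)^k / k.factorial) * ((lam⁻¹)^N * (stirling1 N m * c m * lam^m)))
          = ((-1:ℝ)^k / k.factorial) * (stirling1 N m * c m * (lam^(N-k) * ((lam⁻¹)^N * lam^m))) := by ring
        _ = _ := by rw [hpow]
  have hcont : Continuous F := by
    rw [hF]; fun_prop
  have h1 : Filter.Tendsto F (nhdsWithin 0 {0}ᶜ) (nhds (stirling1 N k)) := by
    rw [← hF0]
    exact (hcont.tendsto 0).mono_left nhdsWithin_le_nhds
  refine h1.congr' ?_
  filter_upwards [self_mem_nhdsWithin] with lam hlam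
  exact (key lam hlam).symm
end

section
/- For N ≥ k ≥ 0, λ^{N-k} S_{2,1/λ}(N,k) = B_{N,k}(1, (λ-1), (λ-1)(λ-2), …, (λ-1)(λ-2)⋯(λ-(N-k))), where B_{N,k} is the exponential partial Bell polynomial; equivalently, λ^{N-k} S_{2,1/λ}(N,k) equals the coefficient satisfying (1/k!)(log_λ(1+t))^k = Σ_{N≥k} λ^{N-k} S_{2,1/λ}(N,k) t^N/N!. -/
/-- The exponential partial Bell polynomial, via its generating function
`(1/k!)(Σ_{i≥1} x_i t^i/i!)^k = Σ_{n≥k} B_{n,k}(x₁,…) t^n/n!`. -/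
noncomputable def partialBell (n k : ℕ) (x : ℕ → ℝ) : ℝ :=
  (n.factorial : ℝ) * PowerSeries.coeff (R := ℝ) n
    (((k.factorial : ℝ))⁻¹ •
      (PowerSeries.mk fun i => if i = 0 then 0 else x i / i.factorial) ^ k)

/-- The formal binomial series `(1+t)^λ`. -/
noncomputable def binomSeries (lam : ℝ) : PowerSeries ℝ :=
  PowerSeries.mk fun n => (descPochhammer ℝ n).eval lam / n.factorial

open Polynomial

lemma descPoch_prod (x : ℝ) (n : ℕ) :
    (descPochhammer ℝ n).eval x = ∏ j ∈ Finset.range n, (x - j) := by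
  induction n with
  | zero => simp
  | succ n ih => rw [descPochhammer_succ_eval, ih, Finset.prod_range_succ]

lemma vander (a b : ℝ) (n : ℕ) :
    (descPochhammer ℝ n).eval (a + b) =
      ∑ i ∈ Finset.range (n + 1), (n.choose i : ℝ) * (descPochhammer ℝ i).eval a *
        (descPochhammer ℝ (n - i)).eval b := by
  induction n with
  | zero => simp
  | succ n ih =>
    have split : ∑ i ∈ Finset.range (n + 2), ((n+1).choose i : ℝ) *
          (descPochhammer ℝ i).eval a * (descPochhammer ℝ (n + 1 - i)).eval b
        = (∑ i ∈ Finset.range (n + 1), (n.choose i : ℝ) *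
            (descPochhammer ℝ (i+1)).eval a * (descPochhammer ℝ (n - i)).eval b)
          + ∑ i ∈ Finset.range (n + 2), (n.choose i : ℝ) *
            (descPochhammer ℝ i).eval a * (descPochhammer ℝ (n + 1 - i)).eval b := by
      rw [Finset.sum_range_succ' (fun i => ((n+1).choose i : ℝ) *
          (descPochhammer ℝ i).eval a * (descPochhammer ℝ (n + 1 - i)).eval b) (n+1),
        Finset.sum_range_succ' (fun i => ((n:ℕ).choose i : ℝ) *
          (descPochhammer ℝ i).eval a * (descPochhammer ℝ (n + 1 - i)).eval b) (n+1)]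
      simp only [Nat.choose_succ_succ, Nat.cast_add, Nat.succ_sub_succ, Nat.succ_eq_add_one,
        add_mul, Finset.sum_add_distrib, Nat.choose_zero_right, Nat.cast_one]
      ring
    rw [split, Finset.sum_range_succ (fun i => ((n:ℕ).choose i : ℝ) *
          (descPochhammer ℝ i).eval a * (descPochhammer ℝ (n + 1 - i)).eval b) (n+1)]
    simp only [Nat.choose_succ_self, Nat.cast_zero, zero_mul, add_zero]
    rw [← Finset.sum_add_distrib, descPochhammer_succ_eval, ih, Finset.sum_mul]
    refine Finset.sum_congr rfl fun i hi => ?_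
    rw [Finset.mem_range] at hi
    have h1 : n + 1 - i = (n - i) + 1 := by omega
    have h2 : ((n - i : ℕ) : ℝ) = (n : ℝ) - i := by
      push_cast [Nat.cast_sub (by omega : i ≤ n)]; ring
    rw [h1, descPochhammer_succ_eval, descPochhammer_succ_eval, h2]
    ring

lemma binomSeries_mul (a b : ℝ) :
    binomSeries a * binomSeries b = binomSeries (a + b) := by
  ext n
  simp only [binomSeries, PowerSeries.coeff_mul, PowerSeries.coeff_mk]
  rw [vander, Finset.Nat.sum_antidiagonal_eq_sum_range_succ_mk, Finset.sum_div]
  refine Finset.sum_congr rfl fun i hi => ?_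
  rw [Finset.mem_range] at hi
  simp only [binomSeries, PowerSeries.coeff_mk]
  have h := Nat.choose_mul_factorial_mul_factorial (by omega : i ≤ n)
  have h1 : (n.choose i : ℝ) * i.factorial * (n - i).factorial = n.factorial := by
    exact_mod_cast congrArg (Nat.cast : ℕ → ℝ) h
  have hi0 : (i.factorial : ℝ) ≠ 0 := Nat.cast_ne_zero.mpr (Nat.factorial_ne_zero i)
  have hni0 : ((n - i).factorial : ℝ) ≠ 0 := Nat.cast_ne_zero.mpr (Nat.factorial_ne_zero _)
  have hn0 : (n.factorial : ℝ) ≠ 0 := Nat.cast_ne_zero.mpr (Nat.factorial_ne_zero n)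
  rw [div_mul_div_comm, div_eq_div_iff (by positivity) hn0, ← h1]
  ring

lemma binomSeries_pow (a : ℝ) (l : ℕ) :
    binomSeries a ^ l = binomSeries (l * a) := by
  induction l with
  | zero =>
    ext n
    simp only [pow_zero, binomSeries, Nat.cast_zero, zero_mul, PowerSeries.coeff_mk,
      PowerSeries.coeff_one, descPochhammer_eval_zero]
    by_cases h : n = 0 <;> simp [h]
  | succ l ih =>
    rw [pow_succ, ih, binomSeries_mul,
      show ((l : ℝ) * a + a) = ((l + 1 : ℕ) : ℝ) * a from by push_cast; ring]

/-- For `N ≥ k ≥ 0` and `λ ≠ 0`: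
`λ^{N-k} S_{2,1/λ}(N,k) = B_{N,k}(1, (λ-1), (λ-1)(λ-2), …, (λ-1)⋯(λ-(N-k)))`,
and equivalently `λ^{N-k} S_{2,1/λ}(N,k)` is the `N`-th coefficient (times `N!`) of
`(1/k!)(log_λ(1+t))^k` where `log_λ(1+t) = ((1+t)^λ - 1)/λ`. -/
theorem stmt14 (lam : ℝ) (hlam : lam ≠ 0) (N k : ℕ) (hkN : k ≤ N) :
    lam ^ (N - k) * degStirling2 (1 / lam) N k =
        partialBell N k (fun i => (descPochhammer ℝ (i - 1)).eval (lam - 1)) ∧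
      lam ^ (N - k) * degStirling2 (1 / lam) N k =
        (N.factorial : ℝ) * PowerSeries.coeff (R := ℝ) N
          (((k.factorial : ℝ))⁻¹ •
            (PowerSeries.C (R := ℝ) lam⁻¹ * (binomSeries lam - 1)) ^ k) := by
  -- the series in `partialBell` equals `λ⁻¹((1+t)^λ - 1)`
  have hser : (PowerSeries.mk fun i : ℕ => if i = 0 then (0:ℝ) else
      (descPochhammer ℝ (i - 1)).eval (lam - 1) / i.factorial)
      = PowerSeries.C (R := ℝ) lam⁻¹ * (binomSeries lam - 1) := by
    ext i
    rw [PowerSeries.coeff_mk, PowerSeries.coeff_C_mul, map_sub]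
    cases i with
    | zero =>
      simp [binomSeries, PowerSeries.coeff_zero_eq_constantCoeff, PowerSeries.coeff_mk]
    | succ j =>
      have hD : (descPochhammer ℝ (j + 1)).eval lam = lam * (descPochhammer ℝ j).eval (lam - 1) := by
        rw [descPochhammer_succ_left, eval_mul, eval_X, eval_comp, eval_sub, eval_X, eval_one]
      simp only [Nat.succ_ne_zero, if_false, binomSeries, PowerSeries.coeff_mk,
        PowerSeries.coeff_one, Nat.add_one_sub_one, hD]
      field_simp
      simp
  -- the main coefficient computation
  have key : lam ^ (N - k) * degStirling2 (1 / lam) N k =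
      (N.factorial : ℝ) * PowerSeries.coeff (R := ℝ) N
        (((k.factorial : ℝ))⁻¹ •
          (PowerSeries.C (R := ℝ) lam⁻¹ * (binomSeries lam - 1)) ^ k) := by
    have hexp : (PowerSeries.C (R := ℝ) lam⁻¹ * (binomSeries lam - 1)) ^ k
        = PowerSeries.C (R := ℝ) (lam⁻¹ ^ k) *
          ∑ l ∈ Finset.range (k + 1), ((-1 : PowerSeries ℝ) ^ (l + k) *
            binomSeries ((l : ℝ) * lam) * (k.choose l : PowerSeries ℝ)) := by
      rw [mul_pow, ← map_pow, sub_pow]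
      congr 1
      refine Finset.sum_congr rfl fun l hl => ?_
      rw [binomSeries_pow, one_pow, mul_one]
    rw [hexp]
    rw [PowerSeries.coeff_smul, PowerSeries.coeff_C_mul, map_sum]
    have hcoeff : ∀ l : ℕ, (PowerSeries.coeff (R := ℝ) N)
        ((-1 : PowerSeries ℝ) ^ (l + k) * binomSeries ((l : ℝ) * lam) * (k.choose l : PowerSeries ℝ))
        = (-1 : ℝ) ^ (l + k) * ((descPochhammer ℝ N).eval ((l : ℝ) * lam) / N.factorial)
          * (k.choose l : ℝ) := by
      intro l
      have : ((-1 : PowerSeries ℝ) ^ (l + k) * binomSeries ((l : ℝ) * lam) *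
          (k.choose l : PowerSeries ℝ))
          = PowerSeries.C (R := ℝ) ((-1 : ℝ) ^ (l + k) * (k.choose l : ℝ)) * binomSeries ((l:ℝ) * lam) := by
        rw [show (-1 : PowerSeries ℝ) = PowerSeries.C (R := ℝ) (-1) from by simp,
          show ((k.choose l : ℕ) : PowerSeries ℝ) = PowerSeries.C (R := ℝ) ((k.choose l : ℕ) : ℝ) from
            (map_natCast _ _).symm, ← map_pow, mul_right_comm, ← map_mul]
      rw [this, PowerSeries.coeff_C_mul, binomSeries, PowerSeries.coeff_mk]
      ring
    simp only [hcoeff]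
    -- unfold the left side
    rw [degStirling2]
    have hgen : ∀ l : ℕ, genFall l N (1 / lam) =
        lam⁻¹ ^ N * (descPochhammer ℝ N).eval ((l : ℝ) * lam) := by
      intro l
      rw [genFall, descPoch_prod,
        show lam⁻¹ ^ N = ∏ _j ∈ Finset.range N, lam⁻¹ from by simp,
        ← Finset.prod_mul_distrib]
      refine Finset.prod_congr rfl fun j _ => ?_
      field_simp
    simp only [hgen, smul_eq_mul, Finset.mul_sum]
    refine Finset.sum_congr rfl fun l hl => ?_
    have hfacN : (N.factorial : ℝ) ≠ 0 := Nat.cast_ne_zero.mpr (Nat.factorial_ne_zero N)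
    have hfack : (k.factorial : ℝ) ≠ 0 := Nat.cast_ne_zero.mpr (Nat.factorial_ne_zero k)
    rw [pow_sub₀ lam hlam hkN, pow_add]
    field_simp
    have h1 : lam ^ N * (1 / lam) ^ N = 1 := by rw [← mul_pow, mul_one_div_cancel hlam, one_pow]
    have h2 : lam ^ k * (1 / lam) ^ k = 1 := by rw [← mul_pow, mul_one_div_cancel hlam, one_pow]
    linear_combination ((k.choose l : ℝ) * (descPochhammer ℝ N).eval (lam * l)) * h1 -
      ((k.choose l : ℝ) * (descPochhammer ℝ N).eval (lam * l)) * h2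
  refine ⟨?_, key⟩
  rw [key]
  simp only [partialBell]
  rw [hser]
end
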